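/- arXiv:0705.0561 — 3 statements merged into one kernel-verified Lean document; each statement's English description precedes it below -/
import Mathlib

section
/- For two binary strings s1 and s2 of length n, the minimum over all binary strings t of length n of max(d(t,s1), d(t,s2)) equals the ceiling of d(s1,s2)/2, where d is Hamming distance. -/
/-!
Any string `t` satisfies `d(s1, s2) ≤ d(t, s1) + d(t, s2)`, so the larger of the two distances is
at least `⌈d(s1, s2) / 2⌉`. Conversely, copying `s2` on `⌊d(s1, s2) / 2⌋` of the positions where
`s1` and `s2` differ, and `s1` everywhere else, gives a string attaining this bound.
-/

open Finset

section Piecewise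

variable {ι : Type*} [Fintype ι] [DecidableEq ι] {β : ι → Type*} [∀ i, DecidableEq (β i)]

theorem hammingDist_piecewise_left {x y : ∀ i, β i} {B : Finset ι}
    (hB : B ⊆ ({i | x i ≠ y i} : Finset ι)) : hammingDist (B.piecewise y x) x = #B := by
  unfold hammingDist
  congr 1
  ext i
  by_cases hi : i ∈ B
  · simpa [hi, ne_comm] using hB hi
  · simp [hi]

theorem hammingDist_piecewise_right (x y : ∀ i, β i) (B : Finset ι) :
    hammingDist (B.piecewise y x) y = #(({i | x i ≠ y i} : Finset ι) \ B) := by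
  unfold hammingDist
  congr 1
  ext i
  by_cases hi : i ∈ B <;> simp [hi]

theorem exists_hammingDist_eq_and_hammingDist_eq (x y : ∀ i, β i) {k : ℕ}
    (hk : k ≤ hammingDist x y) :
    ∃ z, hammingDist z x = k ∧ hammingDist z y = hammingDist x y - k := by
  obtain ⟨B, hBsub, hBcard⟩ := exists_subset_card_eq hk
  refine ⟨B.piecewise y x, ?_, ?_⟩
  · rw [hammingDist_piecewise_left hBsub, hBcard]
  · rw [hammingDist_piecewise_right, card_sdiff_of_subset hBsub, hBcard, hammingDist]

end Piecewise

/-- For two binary strings `s1 s2` of length `n`, the minimum over all binary strings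
`t` of `max (d(t,s1)) (d(t,s2))` equals `⌈d(s1,s2)/2⌉`. -/
theorem closest_string_two_strings (n : ℕ) (s1 s2 : Fin n → Bool) :
    IsLeast {d : ℕ | ∃ t : Fin n → Bool,
        max (hammingDist t s1) (hammingDist t s2) = d}
      ((hammingDist s1 s2 + 1) / 2) := by
  refine ⟨?_, ?_⟩
  · obtain ⟨t, ht1, ht2⟩ :=
      exists_hammingDist_eq_and_hammingDist_eq s1 s2 (Nat.div_le_self (hammingDist s1 s2) 2)
    exact ⟨t, by omega⟩
  · rintro _ ⟨t, rfl⟩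
    have := hammingDist_triangle_left s1 s2 t
    omega
end

section
/- For three binary strings s1, s2, s3 in the canonical block form (blocks of sizes α, β, γ as described), there exists an optimal center string t (one minimizing max_i d(t,s_i)) such that t has no ones in block α, or no zeros in block β, or no zeros in block γ. -/
/-!
Take any optimal center `t`. If it had a one at `i` in block α, a zero at `j` in block β and a
zero at `k` in block γ, then each of `s1, s2, s3` would disagree with `t` at two of the three
positions `i, j, k` (`s1` at `i, k`, `s2` at `i, j`, `s3` at `j, k`). Flipping `t` at all three
positions therefore lowers every distance by one, contradicting optimality.
-/

open Finset

section FlipOn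

variable {ι : Type*} [Fintype ι] [DecidableEq ι]

def flipOn (A : Finset ι) (t : ι → Bool) : ι → Bool :=
  fun x => if x ∈ A then !t x else t x

theorem hammingDist_flipOn_add (A : Finset ι) (t s : ι → Bool) :
    hammingDist (flipOn A t) s + 2 * #{x ∈ A | t x ≠ s x} = hammingDist t s + #A := by
  rw [hammingDist, hammingDist, card_filter, card_filter, card_filter, card_eq_sum_ones A,
    mul_sum, ← univ_inter A, ← sum_ite_mem, ← sum_ite_mem, ← sum_add_distrib, ← sum_add_distrib]
  refine sum_congr rfl fun x _ => ?_
  unfold flipOn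
  by_cases hx : x ∈ A <;> cases t x <;> cases s x <;> simp [hx]

theorem hammingDist_flipOn_lt {A : Finset ι} (hA : #A ≤ 3) {t s : ι → Bool} {a b : ι}
    (haA : a ∈ A) (hbA : b ∈ A) (hab : a ≠ b) (ha : t a ≠ s a) (hb : t b ≠ s b) :
    hammingDist (flipOn A t) s < hammingDist t s := by
  have hdisagree : 1 < #{x ∈ A | t x ≠ s x} :=
    one_lt_card.mpr ⟨a, mem_filter.mpr ⟨haA, ha⟩, b, mem_filter.mpr ⟨hbA, hb⟩, hab⟩
  have hflip := hammingDist_flipOn_add A t s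
  omega

end FlipOn

/-- There is an optimal center string which has no ones in block α, or no zeros in
block β, or no zeros in block γ. -/
theorem exists_optimal_center_with_empty_block (α β γ : ℕ)
    (s1 s2 s3 : Fin (α + β + γ) → Bool)
    (hs1 : ∀ i : Fin (α + β + γ), s1 i = decide (α + β ≤ (i : ℕ)))
    (hs2 : ∀ i : Fin (α + β + γ), s2 i = decide (α ≤ (i : ℕ) ∧ (i : ℕ) < α + β))
    (hs3 : ∀ i : Fin (α + β + γ), s3 i = true) :
    ∃ t : Fin (α + β + γ) → Bool,
      (∀ t' : Fin (α + β + γ) → Bool,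
        max (max (hammingDist t s1) (hammingDist t s2)) (hammingDist t s3) ≤
        max (max (hammingDist t' s1) (hammingDist t' s2)) (hammingDist t' s3)) ∧
      ((Finset.univ.filter
          (fun i : Fin (α + β + γ) => (i : ℕ) < α ∧ t i = true)).card = 0 ∨
       (Finset.univ.filter
          (fun i : Fin (α + β + γ) => α ≤ (i : ℕ) ∧ (i : ℕ) < α + β ∧ t i = false)).card = 0 ∨
       (Finset.univ.filter
          (fun i : Fin (α + β + γ) => α + β ≤ (i : ℕ) ∧ t i = false)).card = 0) := by
  obtain ⟨t, hopt⟩ := Finite.exists_min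
    fun t : Fin (α + β + γ) → Bool =>
      max (max (hammingDist t s1) (hammingDist t s2)) (hammingDist t s3)
  refine ⟨t, hopt, ?_⟩
  by_contra! ⟨hα, hβ, hγ⟩
  obtain ⟨i, hi⟩ := card_ne_zero.mp hα
  obtain ⟨j, hj⟩ := card_ne_zero.mp hβ
  obtain ⟨k, hk⟩ := card_ne_zero.mp hγ
  simp only [mem_filter, mem_univ, true_and] at hi hj hk
  have hij : i ≠ j := Fin.ne_of_val_ne (by omega)
  have hik : i ≠ k := Fin.ne_of_val_ne (by omega)
  have hjk : j ≠ k := Fin.ne_of_val_ne (by omega)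
  have hA : #{i, j, k} ≤ 3 := card_le_three
  have h1 := hammingDist_flipOn_lt (t := t) (s := s1) hA (by simp) (by simp) hik
    (by rw [hi.2, hs1]; simp; omega) (by rw [hk.2, hs1]; simp; omega)
  have h2 := hammingDist_flipOn_lt (t := t) (s := s2) hA (by simp) (by simp) hij
    (by rw [hi.2, hs2]; simp; omega) (by rw [hj.2.2, hs2]; simp; omega)
  have h3 := hammingDist_flipOn_lt (t := t) (s := s3) hA (by simp) (by simp) hjk
    (by rw [hj.2.2, hs3]; simp) (by rw [hk.2, hs3]; simp)
  have hflip_not_better := hopt (flipOn {i, j, k} t)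
  simp only [max_le_iff, le_max_iff] at hflip_not_better
  omega
end

section
/- For three binary strings in canonical block form with b = 0 forced (optimal center agrees with all-ones on block β) and a ≤ c (number of ones in block α at most the number of zeros in block γ), setting a' = 0, c' = c − a gives distances D1' = β + c', D2 = γ − c', D3 = α + c', and if additionally every optimal solution has b = 0 then |D3 − D2| ≤ 1. -/
/-!
Write `D₁, D₂, D₃` for the distances of the center `(a, b, c)`. The moves `c ↦ c - 1` and
`a ↦ a - 1` change `(D₁, D₂, D₃)` by `(-1, +1, -1)` and `(-1, -1, +1)`, so they strictly lower
the maximum when `D₃ ≥ D₂ + 2`, resp. `D₂ ≥ D₃ + 2`, provided `c ≥ 1`, resp. `a ≥ 1`. In the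
boundary cases `c = 0`, resp. `a = 0`, the moves `(a + 1, 1, 0)` and `(0, 1, c + 1)` change the
distances by `(0, +2, 0)` and `(0, 0, +2)`, producing an optimum with `b = 1`; when `β = 0` this is
not available, but then `(a + 1, 0, 0)`, resp. `(0, 0, c + 1)`, is strictly better.
-/

def dist₁ (β a b c : ℕ) : ℕ := a + (β - b) + c

def dist₂ (γ a b c : ℕ) : ℕ := a + b + (γ - c)

def dist₃ (α a b c : ℕ) : ℕ := (α - a) + b + c

def radius (α β γ a b c : ℕ) : ℕ := max (max (dist₁ β a b c) (dist₂ γ a b c)) (dist₃ α a b c)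

def IsMinimizer (α β γ a b c : ℕ) : Prop :=
  ∀ a' b' c', a' ≤ α → b' ≤ β → c' ≤ γ → radius α β γ a b c ≤ radius α β γ a' b' c'

namespace IsMinimizer

variable {α β γ a b c a' b' c' : ℕ}

theorem of_radius_le (h : IsMinimizer α β γ a b c)
    (hle : radius α β γ a' b' c' ≤ radius α β γ a b c) : IsMinimizer α β γ a' b' c' :=
  fun a'' b'' c'' ha hb hc => hle.trans (h a'' b'' c'' ha hb hc)

theorem dist₃_le_dist₂_add_one
    (hforce : ∀ a b c, a ≤ α → b ≤ β → c ≤ γ → IsMinimizer α β γ a b c → b = 0)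
    (hopt : IsMinimizer α β γ a 0 c) (ha : a ≤ α) (hc : c ≤ γ) :
    dist₃ α a 0 c ≤ dist₂ γ a 0 c + 1 := by
  by_contra! h
  unfold dist₂ dist₃ at h
  rcases Nat.eq_zero_or_pos c with rfl | hc₀
  · rcases Nat.eq_zero_or_pos β with rfl | hβ
    · have := hopt (a + 1) 0 0 (by omega) le_rfl (Nat.zero_le γ)
      simp only [radius, dist₁, dist₂, dist₃] at this
      omega
    · have htie : IsMinimizer α β γ (a + 1) 1 0 :=
        hopt.of_radius_le (by simp only [radius, dist₁, dist₂, dist₃]; omega)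
      exact one_ne_zero (hforce (a + 1) 1 0 (by omega) hβ (Nat.zero_le γ) htie)
  · have := hopt a 0 (c - 1) ha (Nat.zero_le β) (by omega)
    simp only [radius, dist₁, dist₂, dist₃] at this
    omega

theorem dist₂_le_dist₃_add_one
    (hforce : ∀ a b c, a ≤ α → b ≤ β → c ≤ γ → IsMinimizer α β γ a b c → b = 0)
    (hopt : IsMinimizer α β γ a 0 c) (ha : a ≤ α) (hc : c ≤ γ) :
    dist₂ γ a 0 c ≤ dist₃ α a 0 c + 1 := by
  by_contra! h
  unfold dist₂ dist₃ at h
  rcases Nat.eq_zero_or_pos a with rfl | ha₀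
  · rcases Nat.eq_zero_or_pos β with rfl | hβ
    · have := hopt 0 0 (c + 1) (Nat.zero_le α) le_rfl (by omega)
      simp only [radius, dist₁, dist₂, dist₃] at this
      omega
    · have htie : IsMinimizer α β γ 0 1 (c + 1) :=
        hopt.of_radius_le (by simp only [radius, dist₁, dist₂, dist₃]; omega)
      exact one_ne_zero (hforce 0 1 (c + 1) (Nat.zero_le α) hβ (by omega) htie)
  · have := hopt (a - 1) 0 c (by omega) (Nat.zero_le β) hc
    simp only [radius, dist₁, dist₂, dist₃] at this
    omega

end IsMinimizer

theorem b_forced_zero_implies_D2_D3_close_general (α β γ : ℕ)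
    (hforce : ∀ a' b' c' : ℕ, a' ≤ α → b' ≤ β → c' ≤ γ →
      (∀ a'' b'' c'' : ℕ, a'' ≤ α → b'' ≤ β → c'' ≤ γ →
        max (max (a' + (β - b') + c') (a' + b' + (γ - c'))) ((α - a') + b' + c') ≤
        max (max (a'' + (β - b'') + c'') (a'' + b'' + (γ - c'')))
          ((α - a'') + b'' + c'')) → b' = 0) :
    ∀ a b c : ℕ, a ≤ α → b ≤ β → c ≤ γ → a ≤ c →
      (∀ a'' b'' c'' : ℕ, a'' ≤ α → b'' ≤ β → c'' ≤ γ →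
        max (max (a + (β - b) + c) (a + b + (γ - c))) ((α - a) + b + c) ≤
        max (max (a'' + (β - b'') + c'') (a'' + b'' + (γ - c'')))
          ((α - a'') + b'' + c'')) →
      (0 + (β - 0) + (c - a) = β + (c - a) ∧
       0 + 0 + (γ - (c - a)) = γ - (c - a) ∧
       (α - 0) + 0 + (c - a) = α + (c - a)) ∧
      ((α - a) + b + c ≤ (a + b + (γ - c)) + 1 ∧
       a + b + (γ - c) ≤ ((α - a) + b + c) + 1) := by
  intro a b c ha hb hc _ hopt
  obtain rfl : b = 0 := hforce a b c ha hb hc hopt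
  exact ⟨by simp, IsMinimizer.dist₃_le_dist₂_add_one hforce hopt ha hc,
    IsMinimizer.dist₂_le_dist₃_add_one hforce hopt ha hc⟩

/-- With `α ≤ γ`: if every optimal `(a,b,c)` has `b = 0`, then for any optimal
`(a,b,c)` with `a ≤ c`, setting `a' = 0`, `c' = c - a` gives distances
`β + c'`, `γ - c'`, `α + c'`, and the optimal distances satisfy `|D3 - D2| ≤ 1`. -/
theorem b_forced_zero_implies_D2_D3_close (α β γ : ℕ) (hαγ : α ≤ γ)
    (hforce : ∀ a' b' c' : ℕ, a' ≤ α → b' ≤ β → c' ≤ γ →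
      (∀ a'' b'' c'' : ℕ, a'' ≤ α → b'' ≤ β → c'' ≤ γ →
        max (max (a' + (β - b') + c') (a' + b' + (γ - c'))) ((α - a') + b' + c') ≤
        max (max (a'' + (β - b'') + c'') (a'' + b'' + (γ - c'')))
          ((α - a'') + b'' + c'')) → b' = 0) :
    ∀ a b c : ℕ, a ≤ α → b ≤ β → c ≤ γ → a ≤ c →
      (∀ a'' b'' c'' : ℕ, a'' ≤ α → b'' ≤ β → c'' ≤ γ →
        max (max (a + (β - b) + c) (a + b + (γ - c))) ((α - a) + b + c) ≤
        max (max (a'' + (β - b'') + c'') (a'' + b'' + (γ - c'')))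
          ((α - a'') + b'' + c'')) →
      (0 + (β - 0) + (c - a) = β + (c - a) ∧
       0 + 0 + (γ - (c - a)) = γ - (c - a) ∧
       (α - 0) + 0 + (c - a) = α + (c - a)) ∧
      ((α - a) + b + c ≤ (a + b + (γ - c)) + 1 ∧
       a + b + (γ - c) ≤ ((α - a) + b + c) + 1) :=
  b_forced_zero_implies_D2_D3_close_general α β γ hforce
end
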